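/- The ATT is identified by the weighting formula: τ^ATT := E[Y(1)−Y(0) | Z=1] = E[Z·Y]/E[Z] − E[(1−Z)·Y·e(λ)/(1−e(λ))]/E[(1−Z)·e(λ)/(1−e(λ))], under latent ignorability and overlap with P(Z=1) > 0. -/

import Mathlib

/-!
Write `w = e / (1 - e)` for the odds of treatment. For a Borel set `t` of potential-outcome
pairs put `q = P((Y(0), Y(1)) ∈ t | λ)`. Conditional independence gives
`E[(1 - Z) 1_t | λ] = q (1 - e)` and `E[Z 1_t | λ] = q e`, and `w` is `λ`-measurable, so
`E[(1 - Z) w 1_t] = E[q e] = E[Z 1_t]`. Hence the finite measures `(1 - Z) w · μ` and `Z · μ`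
push forward to the same law of `(Y(0), Y(1))`, and integrating `Y(0)` (resp. `1`) against it
identifies the control numerator with `E[Z Y(0)]` (resp. the denominator with `E[Z]`). No
integrability of `Y(0)` is needed this way.
-/

open MeasureTheory ProbabilityTheory

section WeightedLaw

variable {Ω β : Type*} [MeasurableSpace Ω] [MeasurableSpace β] {μ : Measure Ω}

theorem integral_map_withDensity_ofReal {f : Ω → ℝ} (hf : AEMeasurable f μ)
    (hf0 : 0 ≤ᵐ[μ] f) {X : Ω → β} (hX : Measurable X) {φ : β → ℝ} (hφ : Measurable φ) :
    ∫ y, φ y ∂(μ.withDensity fun ω => ENNReal.ofReal (f ω)).map X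
      = ∫ ω, f ω * φ (X ω) ∂μ := by
  rw [integral_map hX.aemeasurable hφ.aestronglyMeasurable,
    integral_withDensity_eq_integral_toReal_smul₀ hf.ennreal_ofReal
      (.of_forall fun _ => ENNReal.ofReal_lt_top)]
  refine integral_congr_ae ?_
  filter_upwards [hf0] with ω hω
  simp [ENNReal.toReal_ofReal hω]

theorem map_withDensity_ofReal_apply {f : Ω → ℝ} (hf : Integrable f μ) (hf0 : 0 ≤ᵐ[μ] f)
    {X : Ω → β} (hX : Measurable X) {t : Set β} (ht : MeasurableSet t) :
    (μ.withDensity fun ω => ENNReal.ofReal (f ω)).map X t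
      = ENNReal.ofReal (∫ ω in X ⁻¹' t, f ω ∂μ) := by
  rw [Measure.map_apply hX ht, withDensity_apply _ (hX ht),
    ofReal_integral_eq_lintegral_ofReal hf.integrableOn (ae_restrict_of_ae hf0)]

theorem integral_mul_comp_eq_of_setIntegral_preimage_eq {f g : Ω → ℝ}
    (hf : Integrable f μ) (hg : Integrable g μ) (hf0 : 0 ≤ᵐ[μ] f) (hg0 : 0 ≤ᵐ[μ] g)
    {X : Ω → β} (hX : Measurable X)
    (h : ∀ t, MeasurableSet t → ∫ ω in X ⁻¹' t, f ω ∂μ = ∫ ω in X ⁻¹' t, g ω ∂μ)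
    {φ : β → ℝ} (hφ : Measurable φ) :
    ∫ ω, f ω * φ (X ω) ∂μ = ∫ ω, g ω * φ (X ω) ∂μ := by
  have hlaw : (μ.withDensity fun ω => ENNReal.ofReal (f ω)).map X
      = (μ.withDensity fun ω => ENNReal.ofReal (g ω)).map X := by
    ext t ht
    rw [map_withDensity_ofReal_apply hf hf0 hX ht, map_withDensity_ofReal_apply hg hg0 hX ht,
      h t ht]
  rw [← integral_map_withDensity_ofReal hf.aemeasurable hf0 hX hφ, hlaw,
    integral_map_withDensity_ofReal hg.aemeasurable hg0 hX hφ]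

end WeightedLaw

section ConditionalIndependence

variable {Ω β : Type*} {m mΩ : MeasurableSpace Ω} [StandardBorelSpace Ω]
  {μ : Measure Ω} [IsFiniteMeasure μ] [MeasurableSpace β] {hm : m ≤ mΩ}
  {X : Ω → β} {Z : Ω → ℝ} {t : Set β}

theorem condExp_indicator_preimage_of_condIndepFun (hCI : CondIndepFun m hm X Z μ)
    (hX : Measurable X) (hZm : Measurable Z) (hZ : ∀ ω, Z ω = 0 ∨ Z ω = 1)
    (ht : MeasurableSet t) :
    μ[(X ⁻¹' t).indicator Z | m] =ᵐ[μ] μ⟦X ⁻¹' t | m⟧ * μ[Z | m] := by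
  have hZ_one : (Z ⁻¹' {1}).indicator (fun _ => (1 : ℝ)) = Z := by
    funext ω
    rcases hZ ω with h | h <;> simp [h]
  have hinter : (X ⁻¹' t).indicator Z = (X ⁻¹' t ∩ Z ⁻¹' {1}).indicator fun _ => 1 := by
    funext ω
    by_cases hx : X ω ∈ t <;> rcases hZ ω with h | h <;> simp [hx, h]
  rw [hinter]
  filter_upwards [(condIndepFun_iff_condExp_inter_preimage_eq_mul hX hZm).mp hCI t {1} ht
    (measurableSet_singleton 1)] with ω hω
  rw [hω, hZ_one, Pi.mul_apply]

theorem condExp_indicator_preimage_one_sub_of_condIndepFun (hCI : CondIndepFun m hm X Z μ)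
    (hX : Measurable X) (hZm : Measurable Z) (hZ : ∀ ω, Z ω = 0 ∨ Z ω = 1)
    (hZi : Integrable Z μ) (ht : MeasurableSet t) :
    μ[(X ⁻¹' t).indicator (1 - Z) | m] =ᵐ[μ] μ⟦X ⁻¹' t | m⟧ * (1 - μ[Z | m]) := by
  have hZ_zero : (Z ⁻¹' {0}).indicator (fun _ => (1 : ℝ)) = 1 - Z := by
    funext ω
    rcases hZ ω with h | h <;> simp [h]
  have hinter : (X ⁻¹' t).indicator (1 - Z) = (X ⁻¹' t ∩ Z ⁻¹' {0}).indicator fun _ => 1 := by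
    funext ω
    by_cases hx : X ω ∈ t <;> rcases hZ ω with h | h <;> simp [hx, h]
  have hcond_one_sub : μ[1 - Z | m] =ᵐ[μ] 1 - μ[Z | m] := by
    have h := condExp_sub (integrable_const (1 : ℝ)) hZi m
    rwa [condExp_const hm] at h
  rw [hinter]
  filter_upwards [(condIndepFun_iff_condExp_inter_preimage_eq_mul hX hZm).mp hCI t {0} ht
    (measurableSet_singleton 0), hcond_one_sub] with ω hω hω'
  rw [hω, hZ_zero, Pi.mul_apply, hω']

theorem setIntegral_preimage_one_sub_mul_odds (hCI : CondIndepFun m hm X Z μ)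
    (hX : Measurable X) (hZm : Measurable Z) (hZ : ∀ ω, Z ω = 0 ∨ Z ω = 1)
    (hZi : Integrable Z μ) {e : Ω → ℝ} (he : e =ᵐ[μ] μ[Z | m]) (he_lt : ∀ᵐ ω ∂μ, e ω < 1)
    (hint : Integrable (fun ω => (1 - Z ω) * (e ω / (1 - e ω))) μ) (ht : MeasurableSet t) :
    ∫ ω in X ⁻¹' t, (1 - Z ω) * (e ω / (1 - e ω)) ∂μ
      = ∫ ω, (μ⟦X ⁻¹' t | m⟧) ω * μ[Z | m] ω ∂μ := by
  set A := X ⁻¹' t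
  have hA : MeasurableSet A := hX ht
  set w : Ω → ℝ := fun ω => e ω / (1 - e ω)
  have hw : AEStronglyMeasurable[m] w μ := by
    refine ⟨fun ω => μ[Z | m] ω / (1 - μ[Z | m] ω), ?_, ?_⟩
    · exact (stronglyMeasurable_condExp.measurable.div
        (measurable_const.sub stronglyMeasurable_condExp.measurable)).stronglyMeasurable
    · filter_upwards [he] with ω hω
      simp only [w, hω]
  have hweighted : A.indicator (fun ω => (1 - Z ω) * w ω) = w * A.indicator (1 - Z) := by
    funext ω
    by_cases h : ω ∈ A <;> simp [h, mul_comm]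
  have hpull : μ[w * A.indicator (1 - Z) | m] =ᵐ[μ] w * μ[A.indicator (1 - Z) | m] := by
    refine condExp_mul_of_aestronglyMeasurable_left hw ?_
      ((integrable_const 1).sub hZi |>.indicator hA)
    rw [← hweighted]
    exact hint.indicator hA
  calc ∫ ω in A, (1 - Z ω) * w ω ∂μ = ∫ ω, (w * A.indicator (1 - Z) : Ω → ℝ) ω ∂μ := by
        rw [← integral_indicator hA, hweighted]
    _ = ∫ ω, μ[w * A.indicator (1 - Z) | m] ω ∂μ := (integral_condExp hm).symm
    _ = ∫ ω, (μ⟦A | m⟧) ω * μ[Z | m] ω ∂μ := by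
        refine integral_congr_ae ?_
        filter_upwards [hpull, he, he_lt,
          condExp_indicator_preimage_one_sub_of_condIndepFun hCI hX hZm hZ hZi ht]
          with ω hpull he he_lt hq
        have : 1 - μ[Z | m] ω ≠ 0 := by rw [← he]; linarith
        rw [hpull, Pi.mul_apply, hq]
        simp only [w, Pi.mul_apply, Pi.sub_apply, Pi.one_apply, he]
        field_simp
        rfl

theorem setIntegral_preimage_of_condIndepFun (hCI : CondIndepFun m hm X Z μ)
    (hX : Measurable X) (hZm : Measurable Z) (hZ : ∀ ω, Z ω = 0 ∨ Z ω = 1)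
    (ht : MeasurableSet t) :
    ∫ ω in X ⁻¹' t, Z ω ∂μ = ∫ ω, (μ⟦X ⁻¹' t | m⟧) ω * μ[Z | m] ω ∂μ := by
  rw [← integral_indicator (hX ht), ← integral_condExp hm]
  exact integral_congr_ae (condExp_indicator_preimage_of_condIndepFun hCI hX hZm hZ ht)

theorem setIntegral_preimage_one_sub_mul_odds_eq (hCI : CondIndepFun m hm X Z μ)
    (hX : Measurable X) (hZm : Measurable Z) (hZ : ∀ ω, Z ω = 0 ∨ Z ω = 1)
    (hZi : Integrable Z μ) {e : Ω → ℝ} (he : e =ᵐ[μ] μ[Z | m]) (he_lt : ∀ᵐ ω ∂μ, e ω < 1)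
    (hint : Integrable (fun ω => (1 - Z ω) * (e ω / (1 - e ω))) μ) (ht : MeasurableSet t) :
    ∫ ω in X ⁻¹' t, (1 - Z ω) * (e ω / (1 - e ω)) ∂μ = ∫ ω in X ⁻¹' t, Z ω ∂μ := by
  rw [setIntegral_preimage_one_sub_mul_odds hCI hX hZm hZ hZi he he_lt hint ht,
    setIntegral_preimage_of_condIndepFun hCI hX hZm hZ ht]

end ConditionalIndependence

theorem att_identification_general
    {Ω : Type*} [mΩ : MeasurableSpace Ω] [StandardBorelSpace Ω]
    {μ : Measure Ω} [IsProbabilityMeasure μ]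
    {r : ℕ} (lam : Ω → EuclideanSpace ℝ (Fin r))
    (Z Y0 Y1 : Ω → ℝ) (hZ : ∀ ω, Z ω = 0 ∨ Z ω = 1)
    (hZm : Measurable Z) (hY0m : Measurable Y0) (hY1m : Measurable Y1)
    (Y : Ω → ℝ) (hY : ∀ ω, Y ω = Z ω * Y1 ω + (1 - Z ω) * Y0 ω)
    (hle : MeasurableSpace.comap lam inferInstance ≤ mΩ)
    (hCI : CondIndepFun (MeasurableSpace.comap lam inferInstance) hle
      (fun ω => (Y0 ω, Y1 ω)) Z μ)
    (e : Ω → ℝ) (he : e =ᵐ[μ] μ[Z|MeasurableSpace.comap lam inferInstance])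
    (hoverlap : ∀ᵐ ω ∂μ, 0 < e ω ∧ e ω < 1)
    (hZi : Integrable Z μ)
    (hint1 : Integrable (fun ω => Z ω * Y ω) μ)
    (hint2 : Integrable (fun ω => Z ω * (Y1 ω - Y0 ω)) μ)
    (hint4 : Integrable (fun ω => (1 - Z ω) * (e ω / (1 - e ω))) μ) :
    (∫ ω, Z ω * (Y1 ω - Y0 ω) ∂μ) / (∫ ω, Z ω ∂μ)
      = (∫ ω, Z ω * Y ω ∂μ) / (∫ ω, Z ω ∂μ)
        - (∫ ω, (1 - Z ω) * Y ω * (e ω / (1 - e ω)) ∂μ)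
          / (∫ ω, (1 - Z ω) * (e ω / (1 - e ω)) ∂μ) := by
  have hbalance (t : Set (ℝ × ℝ)) (ht : MeasurableSet t) :
      ∫ ω in (fun ω => (Y0 ω, Y1 ω)) ⁻¹' t, (1 - Z ω) * (e ω / (1 - e ω)) ∂μ
        = ∫ ω in (fun ω => (Y0 ω, Y1 ω)) ⁻¹' t, Z ω ∂μ :=
    setIntegral_preimage_one_sub_mul_odds_eq hCI (hY0m.prodMk hY1m) hZm hZ hZi he
      (hoverlap.mono fun _ h => h.2) hint4 ht
  have hweight_nonneg : 0 ≤ᵐ[μ] fun ω => (1 - Z ω) * (e ω / (1 - e ω)) := by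
    filter_upwards [hoverlap] with ω ⟨h0, h1⟩
    rcases hZ ω with h | h <;> simp [h, div_nonneg h0.le (sub_nonneg.2 h1.le)]
  have hcontrol_Y0 : ∫ ω, (1 - Z ω) * Y ω * (e ω / (1 - e ω)) ∂μ = ∫ ω, Z ω * Y0 ω ∂μ := by
    rw [← integral_mul_comp_eq_of_setIntegral_preimage_eq hint4 hZi hweight_nonneg
      (.of_forall fun ω => by rcases hZ ω with h | h <;> simp [h])
      (hY0m.prodMk hY1m) hbalance measurable_fst]
    refine integral_congr_ae (.of_forall fun ω => ?_)
    rcases hZ ω with h | h <;> simp [hY ω, h, mul_comm]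
  have hcontrol_one : ∫ ω, (1 - Z ω) * (e ω / (1 - e ω)) ∂μ = ∫ ω, Z ω ∂μ := by
    simpa using hbalance Set.univ MeasurableSet.univ
  have hZY (ω : Ω) : Z ω * Y ω = Z ω * Y1 ω := by rcases hZ ω with h | h <;> simp [hY ω, h]
  have htreated_effect : ∫ ω, Z ω * (Y1 ω - Y0 ω) ∂μ
      = ∫ ω, Z ω * Y ω ∂μ - ∫ ω, Z ω * Y0 ω ∂μ := by
    have hZY0 : Integrable (fun ω => Z ω * Y0 ω) μ :=
      (hint1.sub hint2).congr (.of_forall fun ω => by simp only [Pi.sub_apply, hZY]; ring)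
    rw [← integral_sub hint1 hZY0]
    exact integral_congr_ae (.of_forall fun ω => by simp only [hZY]; ring)
  rw [htreated_effect, hcontrol_Y0, hcontrol_one, sub_div]

/-- ATT identification by weighting:
E[Y(1)−Y(0)|Z=1] = E[ZY]/E[Z] − E[(1−Z)·Y·e/(1−e)]/E[(1−Z)·e/(1−e)],
where E[·|Z=1] is formalized as E[Z·(Y(1)−Y(0))]/E[Z]. -/
theorem att_identification
    {Ω : Type*} [mΩ : MeasurableSpace Ω] [StandardBorelSpace Ω]
    {μ : Measure Ω} [IsProbabilityMeasure μ]
    {r : ℕ} (lam : Ω → EuclideanSpace ℝ (Fin r)) (hlam : Measurable lam)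
    (Z Y0 Y1 : Ω → ℝ) (hZ : ∀ ω, Z ω = 0 ∨ Z ω = 1)
    (hZm : Measurable Z) (hY0m : Measurable Y0) (hY1m : Measurable Y1)
    (Y : Ω → ℝ) (hY : ∀ ω, Y ω = Z ω * Y1 ω + (1 - Z ω) * Y0 ω)
    (hle : MeasurableSpace.comap lam inferInstance ≤ mΩ)
    (hCI : CondIndepFun (MeasurableSpace.comap lam inferInstance) hle
      (fun ω => (Y0 ω, Y1 ω)) Z μ)
    (e : Ω → ℝ) (he : e =ᵐ[μ] μ[Z|MeasurableSpace.comap lam inferInstance])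
    (hoverlap : ∀ᵐ ω ∂μ, 0 < e ω ∧ e ω < 1)
    (htreated : 0 < ∫ ω, Z ω ∂μ)
    (hZi : Integrable Z μ)
    (hint1 : Integrable (fun ω => Z ω * Y ω) μ)
    (hint2 : Integrable (fun ω => Z ω * (Y1 ω - Y0 ω)) μ)
    (hint3 : Integrable (fun ω => (1 - Z ω) * Y ω * (e ω / (1 - e ω))) μ)
    (hint4 : Integrable (fun ω => (1 - Z ω) * (e ω / (1 - e ω))) μ)
    (hint5 : Integrable (fun ω => Y0 ω * (e ω / (1 - e ω))) μ) :
    (∫ ω, Z ω * (Y1 ω - Y0 ω) ∂μ) / (∫ ω, Z ω ∂μ)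
      = (∫ ω, Z ω * Y ω ∂μ) / (∫ ω, Z ω ∂μ)
        - (∫ ω, (1 - Z ω) * Y ω * (e ω / (1 - e ω)) ∂μ)
          / (∫ ω, (1 - Z ω) * (e ω / (1 - e ω)) ∂μ) :=
  att_identification_general (mΩ := mΩ) lam Z Y0 Y1 hZ hZm hY0m hY1m Y hY hle hCI e he hoverlap hZi
    hint1 hint2 hint4
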